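/- Let X be the unital *-subalgebra of the localized Weyl algebra generated by x = (p − αi)⁻¹ and y = (q − βi)⁻¹ (α, β nonzero reals), with relations x − x* = 2iα x*x and y − y* = 2iβ y*y. Then 1 − α² x*x = (1 + iαx)*(1 + iαx) and 1 − β² y*y = (1 + iβy)*(1 + iβy) in X; consequently X is algebraically bounded (X = X_b). -/

import Mathlib

/-!
The elements `b` with `λ - b* b ∈ ΣX²` for some `λ > 0` form a `*`-subalgebra (the
parallelogram law gives sums, conjugating `λ - a* a` by `b` gives products, and
`λ (λ - b b*) = (λ - b b*)² + b (λ - b* b) b*` gives adjoints). Since `X` is generated by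
`x, y, x*, y*`, it suffices that `x` and `y` are bounded, and by the relation
`x - x* = 2iα x* x` the element `1 - α² x* x` is the hermitian square of `1 + iα x`.
-/

section

open Complex

variable {X : Type*}

variable (X) in
def sumHermSq [NonUnitalNonAssocSemiring X] [Star X] : AddSubmonoid X :=
  AddSubmonoid.closure (Set.range fun c : X => star c * c)

section NonUnitalSemiring
variable [NonUnitalSemiring X] [StarMul X]

theorem star_mul_self_mem_sumHermSq (c : X) : star c * c ∈ sumHermSq X :=
  AddSubmonoid.subset_closure ⟨c, rfl⟩

theorem star_mul_mul_mem_sumHermSq (a : X) {s : X} (hs : s ∈ sumHermSq X) :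
    star a * s * a ∈ sumHermSq X := by
  induction hs using AddSubmonoid.closure_induction with
  | mem _ hw =>
    obtain ⟨c, rfl⟩ := hw
    simpa [mul_assoc] using star_mul_self_mem_sumHermSq (c * a)
  | zero => simp
  | add u v _ _ hu hv => simpa [mul_add, add_mul] using add_mem hu hv

end NonUnitalSemiring

theorem one_mem_sumHermSq [Semiring X] [StarRing X] : (1 : X) ∈ sumHermSq X := by
  simpa using star_mul_self_mem_sumHermSq (1 : X)

section AlgBounded
variable [Ring X] [StarRing X] [Algebra ℂ X]

open scoped ComplexOrder in
theorem ofReal_smul_mem_sumHermSq [StarModule ℂ X] {r : ℝ} (hr : 0 ≤ r) {s : X}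
    (hs : s ∈ sumHermSq X) : (r : ℂ) • s ∈ sumHermSq X :=
  smul_mem_closure_star_mul (StarOrderedRing.nonneg_iff.mp (zero_le_real.mpr hr)) hs

theorem mem_sumHermSq_of_ofReal_smul_mem [StarModule ℂ X] {r : ℝ} (hr : 0 < r) {s : X}
    (hs : (r : ℂ) • s ∈ sumHermSq X) : s ∈ sumHermSq X := by
  have := ofReal_smul_mem_sumHermSq (inv_nonneg.mpr hr.le) hs
  rwa [smul_smul, ← ofReal_mul, inv_mul_cancel₀ hr.ne', ofReal_one, one_smul] at this

def IsAlgBounded (b : X) : Prop :=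
  ∃ lam : ℝ, 0 < lam ∧ (lam : ℂ) • (1 : X) - star b * b ∈ sumHermSq X

theorem IsAlgBounded.add {a b : X} (ha : IsAlgBounded a) (hb : IsAlgBounded b) :
    IsAlgBounded (a + b) := by
  obtain ⟨l₁, hl₁, h₁⟩ := ha
  obtain ⟨l₂, hl₂, h₂⟩ := hb
  refine ⟨2 * (l₁ + l₂), by positivity, ?_⟩
  have key : ((2 * (l₁ + l₂) : ℝ) : ℂ) • (1 : X) - star (a + b) * (a + b) =
      ((l₁ : ℂ) • 1 - star a * a) + ((l₁ : ℂ) • 1 - star a * a) +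
        (((l₂ : ℂ) • 1 - star b * b) + ((l₂ : ℂ) • 1 - star b * b)) +
        star (a - b) * (a - b) := by
    simp only [star_add, star_sub, add_mul, mul_add, sub_mul, mul_sub]
    push_cast
    module
  rw [key]
  exact add_mem (add_mem (add_mem h₁ h₁) (add_mem h₂ h₂)) (star_mul_self_mem_sumHermSq _)

theorem IsAlgBounded.mul [StarModule ℂ X] {a b : X} (ha : IsAlgBounded a)
    (hb : IsAlgBounded b) : IsAlgBounded (a * b) := by
  obtain ⟨l₁, hl₁, h₁⟩ := ha
  obtain ⟨l₂, hl₂, h₂⟩ := hb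
  refine ⟨l₁ * l₂, by positivity, ?_⟩
  have key : ((l₁ * l₂ : ℝ) : ℂ) • (1 : X) - star (a * b) * (a * b) =
      (l₁ : ℂ) • ((l₂ : ℂ) • 1 - star b * b) + star b * ((l₁ : ℂ) • 1 - star a * a) * b := by
    simp only [star_mul, mul_sub, sub_mul, mul_smul_comm, smul_mul_assoc, mul_one, mul_assoc]
    push_cast
    module
  rw [key]
  exact add_mem (ofReal_smul_mem_sumHermSq hl₁.le h₂) (star_mul_mul_mem_sumHermSq b h₁)

protected theorem IsAlgBounded.star [StarModule ℂ X] {b : X} (hb : IsAlgBounded b) :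
    IsAlgBounded (star b) := by
  obtain ⟨l, hl, h⟩ := hb
  refine ⟨l, hl, mem_sumHermSq_of_ofReal_smul_mem hl ?_⟩
  rw [star_star]
  set d := (l : ℂ) • (1 : X) - b * star b
  have hd : star d = d := by simp [d, star_sub, star_smul]
  have key : (l : ℂ) • d =
      star d * d + star (star b) * ((l : ℂ) • 1 - star b * b) * star b := by
    simp only [hd, d, star_star, mul_sub, sub_mul, smul_mul_assoc, mul_smul_comm, one_mul,
      mul_one, mul_assoc, smul_sub]
    module
  rw [key]
  exact add_mem (star_mul_self_mem_sumHermSq d) (star_mul_mul_mem_sumHermSq _ h)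

theorem isAlgBounded_algebraMap [StarModule ℂ X] (c : ℂ) : IsAlgBounded (algebraMap ℂ X c) := by
  refine ⟨normSq c + 1, add_pos_of_nonneg_of_pos (normSq_nonneg c) one_pos, ?_⟩
  have key : ((normSq c + 1 : ℝ) : ℂ) • (1 : X) -
      star (algebraMap ℂ X c) * algebraMap ℂ X c = 1 := by
    rw [Algebra.algebraMap_eq_smul_one, star_smul, star_one, smul_mul_smul_comm, mul_one,
      Complex.star_def, ← Complex.normSq_eq_conj_mul_self]
    push_cast
    module
  rw [key]
  exact one_mem_sumHermSq

variable (X) in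
def algBoundedStarSubalgebra [StarModule ℂ X] : StarSubalgebra ℂ X where
  carrier := {b | IsAlgBounded b}
  add_mem' := IsAlgBounded.add
  mul_mem' := IsAlgBounded.mul
  algebraMap_mem' := isAlgBounded_algebraMap
  star_mem' := IsAlgBounded.star

variable [StarModule ℂ X]

theorem one_sub_sq_smul_star_mul_self_eq (α : ℝ) {x : X}
    (hrel : x - star x = (2 * I * (α : ℂ)) • (star x * x)) :
    (1 : X) - ((α : ℂ) ^ 2) • (star x * x) =
      star (1 + (I * (α : ℂ)) • x) * (1 + (I * (α : ℂ)) • x) := by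
  have hconj : star (I * (α : ℂ)) = -(I * α) := by simp
  rw [star_add, star_one, star_smul, hconj]
  simp only [add_mul, mul_add, one_mul, mul_one, smul_mul_smul_comm]
  linear_combination (norm := match_scalars <;> grind [I_sq]) (-(I * α)) • hrel

theorem isAlgBounded_of_sub_star_eq {α : ℝ} (hα : α ≠ 0) {x : X}
    (hrel : x - star x = (2 * I * (α : ℂ)) • (star x * x)) : IsAlgBounded x := by
  refine ⟨(α ^ 2)⁻¹, by positivity,
    mem_sumHermSq_of_ofReal_smul_mem (r := α ^ 2) (by positivity) ?_⟩
  have hscale : ((α ^ 2 : ℝ) : ℂ) • ((((α ^ 2)⁻¹ : ℝ) : ℂ) • (1 : X) - star x * x) =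
      1 - ((α : ℂ) ^ 2) • (star x * x) := by
    rw [smul_sub, smul_smul, ← ofReal_mul, mul_inv_cancel₀ (by positivity), ofReal_one,
      one_smul, ofReal_pow]
  rw [hscale, one_sub_sq_smul_star_mul_self_eq α hrel]
  exact star_mul_self_mem_sumHermSq _

end AlgBounded

end

theorem stmt_13_general {X : Type*} [Ring X] [StarRing X] [Algebra ℂ X] [StarModule ℂ X]
    (α β : ℝ) (hα : α ≠ 0) (hβ : β ≠ 0) (x y : X)
    (hgen : Algebra.adjoin ℂ ({x, y, star x, star y} : Set X) = ⊤)
    (hxrel : x - star x = (2 * Complex.I * (α : ℂ)) • (star x * x))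
    (hyrel : y - star y = (2 * Complex.I * (β : ℂ)) • (star y * y)) :
    (1 : X) - ((α : ℂ) ^ 2) • (star x * x) =
      star (1 + (Complex.I * (α : ℂ)) • x) * (1 + (Complex.I * (α : ℂ)) • x) ∧
    (1 : X) - ((β : ℂ) ^ 2) • (star y * y) =
      star (1 + (Complex.I * (β : ℂ)) • y) * (1 + (Complex.I * (β : ℂ)) • y) ∧
    ∀ b : X, ∃ lam : ℝ, 0 < lam ∧
      (lam : ℂ) • (1 : X) - star b * b ∈
        AddSubmonoid.closure {w : X | ∃ c : X, w = star c * c} := by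
  refine ⟨one_sub_sq_smul_star_mul_self_eq α hxrel, one_sub_sq_smul_star_mul_self_eq β hyrel,
    fun b => ?_⟩
  have hx : x ∈ algBoundedStarSubalgebra X := isAlgBounded_of_sub_star_eq hα hxrel
  have hy : y ∈ algBoundedStarSubalgebra X := isAlgBounded_of_sub_star_eq hβ hyrel
  have hgens : ({x, y, star x, star y} : Set X) ⊆ algBoundedStarSubalgebra X := by
    simp [Set.insert_subset_iff, hx, hy, star_mem hx, star_mem hy]
  obtain ⟨lam, hlam, hb⟩ : IsAlgBounded b :=
    Algebra.adjoin_le (S := (algBoundedStarSubalgebra X).toSubalgebra) hgens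
      (hgen ▸ Algebra.mem_top)
  have hset : Set.range (fun c : X => star c * c) = {w | ∃ c, w = star c * c} := by
    ext; simp [eq_comm]
  exact ⟨lam, hlam, hset ▸ hb⟩

/-- Let `X` be the unital `*`-algebra generated by `x = (p - αi)⁻¹` and `y = (q - βi)⁻¹`
(`α, β` nonzero reals) with the relations `x - x* = 2iα x*x`, `y - y* = 2iβ y*y`
(and normality of `x, y`).  Then `1 - α² x*x = (1 + iαx)*(1 + iαx)` and
`1 - β² y*y = (1 + iβy)*(1 + iβy)`; consequently `X` is algebraically bounded:
every `b ∈ X` satisfies `λ·1 - b*b ∈ ΣX²` for some `λ > 0`. -/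
theorem stmt_13 {X : Type*} [Ring X] [StarRing X] [Algebra ℂ X] [StarModule ℂ X]
    (α β : ℝ) (hα : α ≠ 0) (hβ : β ≠ 0) (x y : X)
    (hgen : Algebra.adjoin ℂ ({x, y, star x, star y} : Set X) = ⊤)
    (hxrel : x - star x = (2 * Complex.I * (α : ℂ)) • (star x * x))
    (hyrel : y - star y = (2 * Complex.I * (β : ℂ)) • (star y * y))
    (hxn : x * star x = star x * x) (hyn : y * star y = star y * y) :
    (1 : X) - ((α : ℂ) ^ 2) • (star x * x) =
      star (1 + (Complex.I * (α : ℂ)) • x) * (1 + (Complex.I * (α : ℂ)) • x) ∧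
    (1 : X) - ((β : ℂ) ^ 2) • (star y * y) =
      star (1 + (Complex.I * (β : ℂ)) • y) * (1 + (Complex.I * (β : ℂ)) • y) ∧
    ∀ b : X, ∃ lam : ℝ, 0 < lam ∧
      (lam : ℂ) • (1 : X) - star b * b ∈
        AddSubmonoid.closure {w : X | ∃ c : X, w = star c * c} :=
  stmt_13_general α β hα hβ x y hgen hxrel hyrel
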